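/- arXiv:2108.10502 — 2 statements merged into one kernel-verified Lean document; each statement's English description precedes it below -/
import Mathlib

section
/- Subdifferential of an integrally convex function reduces to local conditions: for an integrally convex function f: ℤⁿ → ℝ ∪ {+∞} and x ∈ dom f, a vector p ∈ ℝⁿ satisfies f(y) - f(x) ≥ ⟨p, y - x⟩ for all y ∈ ℤⁿ if and only if f(x+d) - f(x) ≥ ⟨p, d⟩ for all d ∈ {-1,0,+1}ⁿ. -/
open scoped BigOperators

/-- The integral neighborhood N(u) = {z ∈ ℤⁿ : |uᵢ − zᵢ| < 1 for all i}. -/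
def intNbhd {n : ℕ} (u : Fin n → ℝ) : Set (Fin n → ℤ) :=
  {z | ∀ i, |u i - (z i : ℝ)| < 1}

/-- The local convex extension f̃(u): the infimum of convex combinations
Σ λ_z f(z) over points z of the integral neighborhood N(u) whose convex
combination with the weights λ equals u.  (It is +∞ when no such
combination exists.) -/
noncomputable def localConvexExt {n : ℕ} (f : (Fin n → ℤ) → EReal)
    (u : Fin n → ℝ) : EReal :=
  sInf { v : EReal | ∃ (t : Finset (Fin n → ℤ)) (lam : (Fin n → ℤ) → ℝ),
    (∀ z ∈ t, z ∈ intNbhd u) ∧ (∀ z ∈ t, 0 ≤ lam z) ∧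
    (∑ z ∈ t, lam z) = 1 ∧
    (∀ i, (∑ z ∈ t, lam z * (z i : ℝ)) = u i) ∧
    v = ∑ z ∈ t, (((lam z : ℝ) : EReal) * f z) }

/-- A function f : ℤⁿ → ℝ ∪ {+∞} with nonempty effective domain is
*integrally convex* if its local convex extension satisfies the midpoint
inequality f̃((x+y)/2) ≤ (f(x)+f(y))/2 for all x, y ∈ ℤⁿ with
‖x − y‖∞ ≥ 2 (this is equivalent to convexity of f̃ on ℝⁿ). -/
def IntegrallyConvexFn {n : ℕ} (f : (Fin n → ℤ) → EReal) : Prop :=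
  (∃ x, f x ≠ ⊤) ∧
  ∀ x y : Fin n → ℤ, (∃ i, 2 ≤ |x i - y i|) →
    localConvexExt f (fun i => ((x i + y i : ℤ) : ℝ) / 2) ≤ (f x + f y) / 2

private lemma ereal_coe_sum {α : Type*} (t : Finset α) (g : α → ℝ) :
    ((∑ z ∈ t, g z : ℝ) : EReal) = ∑ z ∈ t, ((g z : ℝ) : EReal) :=
  map_sum (⟨⟨Real.toEReal, EReal.coe_zero⟩, EReal.coe_add⟩ : ℝ →+ EReal) g t


/-- **Subgradients of integrally convex functions are characterized
locally.**  For integrally convex f : ℤⁿ → ℝ ∪ {+∞} and x ∈ dom f,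
p ∈ ℝⁿ satisfies f(y) − f(x) ≥ ⟨p, y − x⟩ for all y ∈ ℤⁿ iff it does for
all y = x + d with d ∈ {−1,0,+1}ⁿ. -/
theorem subgradient_local_characterization (n : ℕ)
    (f : (Fin n → ℤ) → EReal) (hnb : ∀ x, f x ≠ ⊥)
    (hf : IntegrallyConvexFn f) (x : Fin n → ℤ) (hx : f x ≠ ⊤)
    (p : Fin n → ℝ) :
    (∀ y : Fin n → ℤ,
        (((∑ i, p i * ((y i - x i : ℤ) : ℝ)) : ℝ) : EReal) + f x ≤ f y) ↔
    (∀ d : Fin n → ℤ, (∀ i, d i = -1 ∨ d i = 0 ∨ d i = 1) →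
        (((∑ i, p i * (d i : ℝ)) : ℝ) : EReal) + f x ≤ f (x + d)) := by
  constructor
  · intro h d _
    have := h (x + d)
    simpa [Pi.add_apply, add_sub_cancel_left] using this
  · intro h
    set c : ℝ := (f x).toReal with hc
    have hfx : f x = (c : EReal) := (EReal.coe_toReal hx (hnb x)).symm
    have key : ∀ m : ℕ, ∀ y : Fin n → ℤ, (∀ i, (y i - x i).natAbs ≤ m) →
        (((∑ i, p i * ((y i - x i : ℤ) : ℝ)) : ℝ) : EReal) + f x ≤ f y := by
      intro m
      induction m using Nat.strong_induction_on with
      | _ m ih =>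
        intro y hy
        by_cases hm : ∀ i, (y i - x i).natAbs ≤ 1
        · have hd : ∀ i, (y - x) i = -1 ∨ (y - x) i = 0 ∨ (y - x) i = 1 := by
            intro i
            have := hm i
            simp only [Pi.sub_apply]
            omega
          have hh := h (y - x) hd
          have hxy : x + (y - x) = y := by
            funext i; simp
          rw [hxy] at hh
          simpa [Pi.sub_apply] using hh
        · push_neg at hm
          obtain ⟨i0, hi0⟩ := hm
          have hm2 : 2 ≤ m := by have := hy i0; omega
          have hex : ∃ i, (2:ℤ) ≤ |x i - y i| := by
            refine ⟨i0, ?_⟩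
            rw [abs_sub_comm, Int.abs_eq_natAbs]
            exact_mod_cast hi0
          have hmid := hf.2 x y hex
          set u : Fin n → ℝ := fun i => ((x i + y i : ℤ) : ℝ) / 2 with hu
          set P : ℝ := ∑ i, p i * ((y i - x i : ℤ) : ℝ) with hP
          have hlow : ((c + P / 2 : ℝ) : EReal) ≤ localConvexExt f u := by
            apply le_sInf
            rintro v ⟨t, lam, hN, hpos, hsum1, hbary, rfl⟩
            have hz : ∀ z ∈ t, (((∑ i, p i * ((z i - x i : ℤ) : ℝ)) : ℝ) : EReal) + f x ≤ f z := by
              intro z hzt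
              apply ih ((m+1)/2) (by omega) z
              intro i
              have h1 : |u i - (z i : ℝ)| < 1 := hN z hzt i
              have hyx : ((y i - x i).natAbs : ℝ) ≤ m := by exact_mod_cast hy i
              have hyx' : |(y i : ℝ) - x i| ≤ m := by
                rwa [show |(y i : ℝ) - (x i : ℝ)| = (((y i - x i).natAbs : ℤ) : ℝ) by
                  rw [Nat.cast_natAbs]; push_cast; ring_nf]
              have hui : u i = ((x i : ℝ) + y i)/2 := by rw [hu]; push_cast; ring
              have habs : |(z i : ℝ) - x i| < 1 + (m:ℝ)/2 := by
                have h2 : |(z i : ℝ) - x i| ≤ |(z i:ℝ) - u i| + |u i - (x i:ℝ)| := by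
                  have := abs_sub_le ((z i:ℝ)) (u i) ((x i:ℝ)); linarith
                have h3 : |(z i:ℝ) - u i| < 1 := by rwa [abs_sub_comm]
                have h4 : |u i - (x i:ℝ)| ≤ (m:ℝ)/2 := by
                  rw [hui]
                  rw [show ((x i:ℝ) + y i)/2 - x i = ((y i:ℝ) - x i)/2 by ring]
                  rw [abs_div]
                  rw [abs_of_pos (by norm_num : (0:ℝ) < 2)]
                  linarith
                linarith
              have h5 : ((2 * (z i - x i).natAbs : ℤ) : ℝ) < m + 2 := by
                rw [show ((2 * (z i - x i).natAbs : ℤ) : ℝ) = 2 * |(z i:ℝ) - x i| by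
                  push_cast [Nat.cast_natAbs]; push_cast; ring_nf]
                linarith
              have h6 : 2 * (z i - x i).natAbs < m + 2 := by exact_mod_cast h5
              omega
            have hterm : ∀ z ∈ t,
                ((lam z * (c + ∑ i, p i * ((z i - x i : ℤ) : ℝ)) : ℝ) : EReal)
                  ≤ ((lam z : ℝ) : EReal) * f z := by
              intro z hzt
              rcases eq_or_lt_of_le (hpos z hzt) with h0 | h0
              · simp [← h0]
              · by_cases htop : f z = ⊤
                · rw [htop, EReal.mul_top_of_pos (by exact_mod_cast h0)]
                  exact le_top
                · have hzz := hz z hzt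
                  rw [hfx] at hzz
                  have hfz : f z = ((f z).toReal : EReal) :=
                    (EReal.coe_toReal htop (hnb z)).symm
                  rw [hfz] at hzz ⊢
                  rw [← EReal.coe_mul]
                  rw [← EReal.coe_add] at hzz
                  apply EReal.coe_le_coe_iff.2
                  have hreal : (∑ i, p i * ((z i - x i : ℤ):ℝ)) + c ≤ (f z).toReal :=
                    EReal.coe_le_coe_iff.1 hzz
                  nlinarith [hpos z hzt]
            have hcomp : ∑ z ∈ t, lam z * (c + ∑ i, p i * ((z i - x i : ℤ) : ℝ)) = c + P/2 := by
              have e1 : ∀ z ∈ t, lam z * (c + ∑ i, p i * ((z i - x i : ℤ) : ℝ))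
                  = lam z * c + ∑ i, (p i * (lam z * (z i:ℝ)) - (p i * (x i:ℝ)) * lam z) := by
                intro z _
                rw [mul_add, Finset.mul_sum]
                congr 1
                apply Finset.sum_congr rfl
                intro i _
                push_cast
                ring
              rw [Finset.sum_congr rfl e1, Finset.sum_add_distrib, ← Finset.sum_mul, hsum1,
                one_mul, Finset.sum_comm]
              have e2 : ∀ i ∈ Finset.univ, ∑ z ∈ t, (p i * (lam z * (z i:ℝ)) - (p i * (x i:ℝ)) * lam z)
                  = p i * ((y i : ℝ) - x i)/2 := by
                intro i _
                rw [Finset.sum_sub_distrib, ← Finset.mul_sum, ← Finset.mul_sum]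
                rw [show (∑ z ∈ t, lam z * (z i:ℝ)) = u i from hbary i, hsum1]
                rw [hu]
                push_cast
                ring
              rw [Finset.sum_congr rfl e2, hP]
              rw [Finset.sum_div]
              congr 1
              apply Finset.sum_congr rfl
              intro i _
              push_cast
              ring
            calc ((c + P/2 : ℝ):EReal)
                = ((∑ z ∈ t, lam z * (c + ∑ i, p i * ((z i - x i : ℤ):ℝ)) : ℝ) : EReal) := by
                  rw [hcomp]
              _ = ∑ z ∈ t, ((lam z * (c + ∑ i, p i * ((z i - x i : ℤ):ℝ)) : ℝ) : EReal) :=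
                  ereal_coe_sum _ _
              _ ≤ ∑ z ∈ t, ((lam z : ℝ):EReal) * f z := Finset.sum_le_sum hterm
          have hle : ((c + P/2 : ℝ):EReal) ≤ (f x + f y)/2 := le_trans hlow hmid
          by_cases hytop : f y = ⊤
          · rw [hytop]; exact le_top
          · have hfy : f y = ((f y).toReal : EReal) := (EReal.coe_toReal hytop (hnb y)).symm
            rw [hfx, hfy, ← EReal.coe_add,
              show (2:EReal) = ((2:ℝ):EReal) by norm_cast, ← EReal.coe_div] at hle
            have hre : c + P/2 ≤ (c + (f y).toReal)/2 := EReal.coe_le_coe_iff.1 hle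
            rw [hfx, hfy, ← EReal.coe_add]
            apply EReal.coe_le_coe_iff.2
            linarith
    intro y
    exact key (Finset.univ.sup fun i => (y i - x i).natAbs) y
      (fun i => Finset.le_sup (f := fun i => (y i - x i).natAbs) (Finset.mem_univ i))
end

section
/- Integral boxed subdifferentiability: let f: ℤⁿ → ℤ ∪ {+∞} be an integer-valued integrally convex function, x ∈ dom f, and B = {p ∈ ℝⁿ : α ≤ p ≤ β} an integral box with α ∈ (ℤ ∪ {-∞})ⁿ, β ∈ (ℤ ∪ {+∞})ⁿ, α ≤ β. If ∂f(x) ∩ B ≠ ∅, then ∂f(x) ∩ B ∩ ℤⁿ ≠ ∅. -/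
open scoped BigOperators

/-!
Induction on `n`. Add to `f` the support function of `[αₙ, βₙ]` in the last coordinate, centred
at `xₙ`, and minimise the last coordinate out: `g y' = min_s f (y', s) + φ (s)`. Both operations
preserve integral convexity (the penalty is affine on every integral neighbourhood, which never
straddles its kink at the integer `xₙ`), `g` is integer valued, and the first `n - 1` coordinates
of `p` form a subgradient of `g` at `x'`; by induction `g` has an integral subgradient `q'` in
the smaller box. Given `q'`, the admissible last coordinates form an interval with endpoints in
`ℤ ∪ {±∞}`, cut out by `αₙ`, `βₙ` and the values of `f` next to `x`; it is nonempty by the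
midpoint inequality of `f` across the hyperplane `yₙ = xₙ`. An integer in it makes `(q', qₙ)` a
local subgradient of `f` at `x`, hence a global one by integral convexity.
-/

open Finset Matrix

namespace EReal

lemma coe_finset_sum {ι : Type*} (s : Finset ι) (r : ι → ℝ) :
    ((∑ i ∈ s, r i : ℝ) : EReal) = ∑ i ∈ s, (r i : EReal) :=
  map_sum (⟨⟨(↑), coe_zero⟩, coe_add⟩ : ℝ →+ EReal) r s

lemma coe_finset_sum_mul {ι : Type*} {s : Finset ι} {r : ι → ℝ} (hr : ∀ i ∈ s, 0 ≤ r i)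
    (X : EReal) : ((∑ i ∈ s, r i : ℝ) : EReal) * X = ∑ i ∈ s, (r i : EReal) * X := by
  induction s using Finset.cons_induction with
  | empty => simp
  | cons i s hi ih =>
    have hs : ∀ j ∈ s, 0 ≤ r j := fun j hj => hr j (mem_cons_of_mem hj)
    rw [sum_cons, sum_cons, coe_add,
      right_distrib_of_nonneg (EReal.coe_nonneg.2 (hr i (mem_cons_self i s)))
        (EReal.coe_nonneg.2 (sum_nonneg hs)), ih hs]

lemma coe_le_of_coe_half_le_half {r : ℝ} {X : EReal} (h : ((r / 2 : ℝ) : EReal) ≤ X / 2) :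
    (r : EReal) ≤ X := by
  have h2 : (2 : EReal) = ((2 : ℝ) : EReal) := rfl
  rwa [h2, le_div_iff_mul_le (by norm_num) (coe_ne_top 2), ← coe_mul, div_mul_cancel₀ r two_ne_zero]
    at h

lemma coe_half_add_le {r s : ℝ} {X Y : EReal} (hr : (r : EReal) ≤ X) (hs : (s : EReal) ≤ Y) :
    (((r + s) / 2 : ℝ) : EReal) ≤ (X + Y) / 2 :=
  div_le_div_right_of_nonneg (by norm_num : (0 : EReal) ≤ 2) (coe_add r s ▸ add_le_add hr hs)

lemma coe_add_le_of_coe_half_add_le {r c : ℝ} {X : EReal}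
    (h : ((r / 2 + c : ℝ) : EReal) ≤ ((c : EReal) + X) / 2) : (r : EReal) + c ≤ X := by
  induction X with
  | bot =>
    have h2 : (⊥ : EReal) / 2 = ⊥ := bot_div_of_pos_ne_top (by norm_num) (coe_ne_top 2)
    rw [add_bot, h2, le_bot_iff] at h
    exact absurd h (coe_ne_bot _)
  | top => exact le_top
  | coe x =>
    rw [← coe_add, show (2 : EReal) = ((2 : ℝ) : EReal) from rfl, ← coe_div,
      EReal.coe_le_coe_iff] at h
    exact_mod_cast (by linarith : r + c ≤ x)

lemma le_sub_of_coe_le_add_neg {r : ℝ} {a X : EReal} (h : (r : EReal) ≤ X + -a) : a ≤ X - r := by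
  rw [le_sub_iff_add_le (.inl (coe_ne_bot _)) (.inl (coe_ne_top _)), add_comm]
  exact add_le_of_le_sub (sub_eq_add_neg X a ▸ h)

lemma coe_sub_le_sub_coe_of_coe_add_le {r s : ℝ} {X Y : EReal}
    (h : ((r + s : ℝ) : EReal) ≤ X + Y) : (s : EReal) - Y ≤ X - r := by
  induction X <;> induction Y <;> simp_all [← coe_add, ← coe_sub]
  linarith

end EReal

def IsIntOrTop (X : EReal) : Prop := X = ⊤ ∨ ∃ k : ℤ, X = ((k : ℝ) : EReal)

def IsIntOrBot (X : EReal) : Prop := X = ⊥ ∨ ∃ k : ℤ, X = ((k : ℝ) : EReal)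

lemma IsIntOrTop.inf {X Y : EReal} (hX : IsIntOrTop X) (hY : IsIntOrTop Y) :
    IsIntOrTop (X ⊓ Y) := by
  rcases le_total X Y with h | h
  · rwa [inf_eq_left.2 h]
  · rwa [inf_eq_right.2 h]

lemma IsIntOrBot.sup {X Y : EReal} (hX : IsIntOrBot X) (hY : IsIntOrBot Y) :
    IsIntOrBot (X ⊔ Y) := by
  rcases le_total X Y with h | h
  · rwa [sup_eq_right.2 h]
  · rwa [sup_eq_left.2 h]

lemma IsIntOrTop.ne_bot {X : EReal} (hX : IsIntOrTop X) : X ≠ ⊥ := by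
  rcases hX with rfl | ⟨k, rfl⟩ <;> simp

lemma IsIntOrBot.neg {X : EReal} (hX : IsIntOrBot X) : IsIntOrTop (-X) := by
  rcases hX with rfl | ⟨k, rfl⟩
  · exact Or.inl EReal.neg_bot
  · exact Or.inr ⟨-k, by push_cast; rfl⟩

lemma IsIntOrTop.add {X Y : EReal} (hX : IsIntOrTop X) (hY : IsIntOrTop Y) :
    IsIntOrTop (X + Y) := by
  rcases hX with rfl | ⟨k, rfl⟩
  · exact Or.inl (EReal.top_add_of_ne_bot hY.ne_bot)
  rcases hY with rfl | ⟨l, rfl⟩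
  · exact Or.inl (EReal.add_top_of_ne_bot (EReal.coe_ne_bot _))
  · exact Or.inr ⟨k + l, by push_cast; rfl⟩

lemma IsIntOrTop.mul_intCast {X : EReal} (hX : IsIntOrTop X) {t : ℤ} (ht : 0 ≤ t) :
    IsIntOrTop (X * ((t : ℝ) : EReal)) := by
  rcases ht.eq_or_lt with rfl | ht
  · exact Or.inr ⟨0, by simp⟩
  rcases hX with rfl | ⟨k, rfl⟩
  · exact Or.inl (EReal.top_mul_coe_of_pos (by exact_mod_cast ht))
  · exact Or.inr ⟨k * t, by push_cast; rfl⟩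

lemma IsIntOrTop.sub_intCast {X : EReal} (hX : IsIntOrTop X) (k : ℤ) :
    IsIntOrTop (X - ((k : ℝ) : EReal)) := by
  rcases hX with rfl | ⟨l, rfl⟩
  · exact Or.inl (EReal.top_sub_coe _)
  · exact Or.inr ⟨l - k, by push_cast; rfl⟩

lemma IsIntOrTop.intCast_sub {X : EReal} (hX : IsIntOrTop X) (k : ℤ) :
    IsIntOrBot (((k : ℝ) : EReal) - X) := by
  rcases hX with rfl | ⟨l, rfl⟩
  · exact Or.inl (EReal.sub_top _)
  · exact Or.inr ⟨k - l, by push_cast; rfl⟩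

lemma exists_int_between {L U : EReal} (hL : IsIntOrBot L) (hU : IsIntOrTop U) (hLU : L ≤ U) :
    ∃ k : ℤ, L ≤ ((k : ℝ) : EReal) ∧ ((k : ℝ) : EReal) ≤ U := by
  rcases hL with rfl | ⟨k, rfl⟩
  · rcases hU with rfl | ⟨l, rfl⟩
    · exact ⟨0, bot_le, le_top⟩
    · exact ⟨l, bot_le, le_rfl⟩
  · exact ⟨k, le_rfl, hLU⟩

theorem exists_int_between_of_finset {ι : Type*} {a b : EReal} (ha : IsIntOrBot a)
    (hb : IsIntOrTop b) (hab : a ≤ b) {P M : Finset ι} {u l : ι → EReal}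
    (hu : ∀ i ∈ P, IsIntOrTop (u i)) (hl : ∀ j ∈ M, IsIntOrBot (l j)) (hau : ∀ i ∈ P, a ≤ u i)
    (hlb : ∀ j ∈ M, l j ≤ b) (hlu : ∀ i ∈ P, ∀ j ∈ M, l j ≤ u i) :
    ∃ r : ℤ, a ≤ (r : ℝ) ∧ ((r : ℝ) : EReal) ≤ b ∧ (∀ i ∈ P, ((r : ℝ) : EReal) ≤ u i) ∧
      ∀ j ∈ M, l j ≤ (r : ℝ) := by
  have hL : IsIntOrBot (a ⊔ M.sup l) :=
    ha.sup (sup_induction (Or.inl rfl) (fun _ h₁ _ h₂ => h₁.sup h₂) hl)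
  have hU : IsIntOrTop (b ⊓ P.inf u) :=
    hb.inf (inf_induction (Or.inl rfl) (fun _ h₁ _ h₂ => h₁.inf h₂) hu)
  have hLU : a ⊔ M.sup l ≤ b ⊓ P.inf u :=
    le_inf (sup_le hab (Finset.sup_le hlb))
      (Finset.le_inf fun i hi => sup_le (hau i hi) (Finset.sup_le fun j hj => hlu i hi j hj))
  obtain ⟨r, hLr, hrU⟩ := exists_int_between hL hU hLU
  exact ⟨r, le_sup_left.trans hLr, hrU.trans inf_le_left,
    fun i hi => hrU.trans (inf_le_right.trans (Finset.inf_le hi)),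
    fun j hj => (Finset.le_sup hj).trans (le_sup_right.trans hLr)⟩

lemma exists_iInf_eq_of_isIntOrTop {ι : Type*} [Nonempty ι] {F : ι → EReal}
    (hF : ∀ i, IsIntOrTop (F i)) {r : ℝ} (hr : ∀ i, (r : EReal) ≤ F i) : ∃ i, ⨅ j, F j = F i := by
  suffices h : ∃ i, ∀ j, F i ≤ F j from h.imp fun i hi => le_antisymm (iInf_le _ _) (le_iInf hi)
  by_cases hfin : ∃ i k, F i = ((k : ℤ) : ℝ)
  · obtain ⟨k₀, ⟨i₀, hi₀⟩, hmin⟩ := Int.exists_least_of_bdd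
      (P := fun k : ℤ => ∃ i, F i = ((k : ℝ) : EReal))
      ⟨⌈r⌉, fun k ⟨i, hi⟩ => Int.ceil_le.2 (by simpa [hi] using hr i)⟩
      (let ⟨i, k, h⟩ := hfin; ⟨k, i, h⟩)
    refine ⟨i₀, fun j => ?_⟩
    rcases hF j with h | ⟨k, h⟩
    · exact h ▸ le_top
    · rw [hi₀, h]
      exact_mod_cast hmin k ⟨j, h⟩
  · have htop : ∀ j, F j = ⊤ := fun j => (hF j).resolve_right fun ⟨k, hk⟩ => hfin ⟨j, k, hk⟩
    exact ⟨Classical.arbitrary ι, fun j => (htop j).symm ▸ le_top⟩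

section IntegrallyConvex

variable {n m : ℕ}

def IntegrallyMidpointConvex (f : (Fin n → ℤ) → EReal) : Prop :=
  ∀ x y : Fin n → ℤ, (∃ i, 2 ≤ |x i - y i|) →
    localConvexExt f (fun i => ((x i + y i : ℤ) : ℝ) / 2) ≤ (f x + f y) / 2

def IsSubgradient (f : (Fin n → ℤ) → EReal) (x : Fin n → ℤ) (p : Fin n → ℝ) : Prop :=
  ∀ y, ((p ⬝ᵥ (Int.cast ∘ (y - x)) : ℝ) : EReal) + f x ≤ f y

def IsLocalSubgradient (f : (Fin n → ℤ) → EReal) (x : Fin n → ℤ) (p : Fin n → ℝ) : Prop :=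
  ∀ y, (∀ i, |y i - x i| ≤ 1) → ((p ⬝ᵥ (Int.cast ∘ (y - x)) : ℝ) : EReal) + f x ≤ f y

noncomputable def unitCube (x : Fin n → ℤ) : Finset (Fin n → ℤ) :=
  Fintype.piFinset fun i => Icc (x i - 1) (x i + 1)

lemma mem_unitCube {x y : Fin n → ℤ} : y ∈ unitCube x ↔ ∀ i, |y i - x i| ≤ 1 := by
  simp only [unitCube, Fintype.mem_piFinset, mem_Icc, abs_le]
  exact forall_congr' fun i => by omega

lemma intCast_dotProduct (u v : Fin n → ℤ) :
    ((u ⬝ᵥ v : ℤ) : ℝ) = (Int.cast ∘ u) ⬝ᵥ (Int.cast ∘ v) :=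
  (Int.castRingHom ℝ).map_dotProduct u v

lemma dotProduct_intCast_sub (p : Fin n → ℝ) (y x : Fin n → ℤ) :
    p ⬝ᵥ (Int.cast ∘ (y - x)) = p ⬝ᵥ (Int.cast ∘ y) - p ⬝ᵥ (Int.cast ∘ x) := by
  rw [← dotProduct_sub]
  congr 1
  ext i
  simp

lemma dotProduct_midpoint (p : Fin n → ℝ) (x y : Fin n → ℤ) :
    p ⬝ᵥ (fun i => ((x i + y i : ℤ) : ℝ) / 2) =
      (p ⬝ᵥ (Int.cast ∘ x) + p ⬝ᵥ (Int.cast ∘ y)) / 2 := by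
  simp only [dotProduct, Function.comp_apply, Int.cast_add, ← sum_add_distrib, sum_div]
  exact sum_congr rfl fun i _ => by ring

lemma snoc_dotProduct (q : Fin m → ℝ) (r : ℝ) (v : Fin (m + 1) → ℝ) :
    (Fin.snoc q r : Fin (m + 1) → ℝ) ⬝ᵥ v = q ⬝ᵥ Fin.init v + r * v (Fin.last m) := by
  simp [dotProduct, Fin.sum_univ_castSucc, Fin.init]

lemma dotProduct_eq_init_add_last (p v : Fin (m + 1) → ℝ) :
    p ⬝ᵥ v = Fin.init p ⬝ᵥ Fin.init v + p (Fin.last m) * v (Fin.last m) := by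
  rw [← snoc_dotProduct, Fin.snoc_init_self]

lemma init_intCast_comp_sub (y x : Fin (m + 1) → ℤ) :
    Fin.init (Int.cast ∘ (y - x) : Fin (m + 1) → ℝ) = Int.cast ∘ (Fin.init y - Fin.init x) :=
  rfl

lemma sum_mul_affine_eq {t : Finset (Fin n → ℤ)} {lam : (Fin n → ℤ) → ℝ} {u : Fin n → ℝ}
    (hsum : ∑ z ∈ t, lam z = 1) (hbar : ∀ i, ∑ z ∈ t, lam z * (z i : ℝ) = u i)
    (Q : Fin n → ℝ) (c : ℝ) :
    ∑ z ∈ t, lam z * (Q ⬝ᵥ (Int.cast ∘ z) + c) = Q ⬝ᵥ u + c := by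
  simp only [mul_add, sum_add_distrib, ← sum_mul, hsum, one_mul, dotProduct, mul_sum,
    Function.comp_apply]
  rw [sum_comm]
  simp only [← hbar, mul_sum]
  congr 1
  exact sum_congr rfl fun i _ => sum_congr rfl fun z _ => by ring

theorem affine_le_localConvexExt {f : (Fin n → ℤ) → EReal} {u : Fin n → ℝ} (Q : Fin n → ℝ)
    (c : ℝ) (h : ∀ z ∈ intNbhd u, ((Q ⬝ᵥ (Int.cast ∘ z) + c : ℝ) : EReal) ≤ f z) :
    ((Q ⬝ᵥ u + c : ℝ) : EReal) ≤ localConvexExt f u := by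
  refine le_sInf ?_
  rintro _ ⟨t, lam, hN, h0, hsum, hbar, rfl⟩
  rw [← sum_mul_affine_eq hsum hbar, EReal.coe_finset_sum]
  refine sum_le_sum fun z hz => ?_
  rw [EReal.coe_mul]
  exact mul_le_mul_of_nonneg_left (h z (hN z hz)) (EReal.coe_nonneg.2 (h0 z hz))

theorem localConvexExt_add_le {f φ : (Fin n → ℤ) → EReal} {u : Fin n → ℝ} (Q : Fin n → ℝ)
    (c : ℝ) (hφ : ∀ z ∈ intNbhd u, φ z = ((Q ⬝ᵥ (Int.cast ∘ z) + c : ℝ) : EReal)) :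
    localConvexExt (fun z => f z + φ z) u ≤ localConvexExt f u + ((Q ⬝ᵥ u + c : ℝ) : EReal) := by
  rw [← EReal.sub_le_iff_le_add (.inl (EReal.coe_ne_bot _)) (.inl (EReal.coe_ne_top _))]
  refine le_sInf ?_
  rintro _ ⟨t, lam, hN, h0, hsum, hbar, rfl⟩
  rw [EReal.sub_le_iff_le_add (.inl (EReal.coe_ne_bot _)) (.inl (EReal.coe_ne_top _))]
  refine sInf_le ⟨t, lam, hN, h0, hsum, hbar, ?_⟩
  rw [← sum_mul_affine_eq hsum hbar, EReal.coe_finset_sum, ← sum_add_distrib]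
  refine sum_congr rfl fun z hz => ?_
  dsimp only
  rw [hφ z (hN z hz), EReal.coe_mul, EReal.left_distrib_of_nonneg_of_ne_top
    (EReal.coe_nonneg.2 (h0 z hz)) (EReal.coe_ne_top _)]

lemma abs_sub_two_mul_le_one {s r : ℤ} (h : |(s : ℝ) / 2 - r| < 1) : |s - 2 * r| ≤ 1 := by
  have h' : |((s - 2 * r : ℤ) : ℝ)| < 2 := by
    rw [show ((s - 2 * r : ℤ) : ℝ) = 2 * ((s : ℝ) / 2 - r) by push_cast; ring, abs_mul, abs_two]
    linarith
  have := abs_lt.1 (show |s - 2 * r| < 2 by exact_mod_cast h')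
  exact abs_le.2 ⟨by omega, by omega⟩

lemma abs_sub_lt_of_mem_intNbhd_midpoint {x y z : Fin n → ℤ} {M : ℤ} (hM : 2 ≤ M)
    (hy : ∀ i, |y i - x i| ≤ M) (hz : z ∈ intNbhd fun i => ((x i + y i : ℤ) : ℝ) / 2)
    (i : Fin n) : |z i - x i| < M := by
  have hzi := abs_lt.1 (hz i)
  have hM' : (2 : ℝ) ≤ M := by exact_mod_cast hM
  have hyi : -(M : ℝ) ≤ y i - x i ∧ (y i : ℝ) - x i ≤ M := by exact_mod_cast abs_le.1 (hy i)
  push_cast at hzi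
  rw [abs_lt]
  constructor <;> (rw [← Int.cast_lt (R := ℝ)]; push_cast; linarith)

theorem IsLocalSubgradient.isSubgradient {f : (Fin n → ℤ) → EReal}
    (hf : IntegrallyMidpointConvex f) {x : Fin n → ℤ} {c : ℝ} (hx : f x = c) {p : Fin n → ℝ}
    (hp : IsLocalSubgradient f x p) : IsSubgradient f x p := by
  suffices h : ∀ M : ℕ, ∀ y, (∀ i, |y i - x i| ≤ M) →
      ((p ⬝ᵥ (Int.cast ∘ (y - x)) : ℝ) : EReal) + f x ≤ f y by
    intro y
    refine h (∑ i, (y i - x i).natAbs) y fun i => ?_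
    rw [Int.abs_eq_natAbs]
    exact_mod_cast single_le_sum (f := fun i => (y i - x i).natAbs) (fun _ _ => Nat.zero_le _)
      (mem_univ i)
  intro M
  induction M using Nat.strong_induction_on with
  | _ M ih =>
  intro y hy
  by_cases hgap : ∃ i, 2 ≤ |x i - y i|
  · have hM : (2 : ℤ) ≤ M := by
      obtain ⟨i, hi⟩ := hgap
      exact hi.trans (abs_sub_comm (x i) (y i) ▸ hy i)
    have hnear : ∀ z ∈ intNbhd fun i => ((x i + y i : ℤ) : ℝ) / 2,
        ((p ⬝ᵥ (Int.cast ∘ z) + (c - p ⬝ᵥ (Int.cast ∘ x)) : ℝ) : EReal) ≤ f z := by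
      intro z hz
      have := ih (M - 1) (by omega) z fun i => by
        have := abs_sub_lt_of_mem_intNbhd_midpoint hM hy hz i
        push_cast [Nat.cast_sub (by omega : 1 ≤ M)]
        omega
      rw [hx, ← EReal.coe_add, dotProduct_intCast_sub] at this
      convert this using 2
      ring
    have hmid := (affine_le_localConvexExt p _ hnear).trans (hf x y hgap)
    rw [dotProduct_midpoint, hx] at hmid
    rw [hx, dotProduct_intCast_sub]
    refine EReal.coe_add_le_of_coe_half_add_le (le_of_eq_of_le ?_ hmid)
    congr 1
    ring
  · push Not at hgap
    exact hp y fun i => abs_le.2 (by have := abs_lt.1 (hgap i); constructor <;> omega)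

theorem localConvexExt_init_le {g : (Fin m → ℤ) → EReal} {H : (Fin (m + 1) → ℤ) → EReal}
    (hgH : ∀ z, g (Fin.init z) ≤ H z) (u : Fin (m + 1) → ℝ) :
    localConvexExt g (Fin.init u) ≤ localConvexExt H u := by
  classical
  refine le_sInf ?_
  rintro _ ⟨t, lam, hN, h0, hsum, hbar, rfl⟩
  have hmaps : ∀ z ∈ t, Fin.init z ∈ t.image Fin.init := fun z hz => mem_image_of_mem _ hz
  set lam' : (Fin m → ℤ) → ℝ := fun w => ∑ z ∈ t with Fin.init z = w, lam z
  refine le_trans (b := ∑ w ∈ t.image Fin.init, (lam' w : EReal) * g w) ?_ ?_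
  · apply sInf_le
    refine ⟨t.image Fin.init, lam', ?_, ?_, ?_, ?_, rfl⟩
    · simp only [mem_image]
      rintro _ ⟨z, hz, rfl⟩ j
      exact hN z hz j.castSucc
    · exact fun w _ => sum_nonneg fun z hz => h0 z (mem_filter.1 hz).1
    · rwa [sum_fiberwise_of_maps_to hmaps]
    · intro j
      simp only [lam', sum_mul]
      rw [Fin.init, ← hbar j.castSucc, ← sum_fiberwise_of_maps_to hmaps]
      refine sum_congr rfl fun w _ => sum_congr rfl fun z hz => ?_
      rw [← (mem_filter.1 hz).2]
      rfl
  · rw [← sum_fiberwise_of_maps_to hmaps]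
    refine sum_le_sum fun w _ => ?_
    rw [EReal.coe_finset_sum_mul fun z hz => h0 z (mem_filter.1 hz).1]
    refine sum_le_sum fun z hz => ?_
    rw [← (mem_filter.1 hz).2]
    exact mul_le_mul_of_nonneg_left (hgH z) (EReal.coe_nonneg.2 (h0 z (mem_filter.1 hz).1))

theorem IntegrallyMidpointConvex.iInf_snoc {H : (Fin (m + 1) → ℤ) → EReal}
    (hH : IntegrallyMidpointConvex H)
    (hatt : ∀ y, ∃ s, ⨅ t, H (Fin.snoc y t) = H (Fin.snoc y s)) :
    IntegrallyMidpointConvex fun y => ⨅ s, H (Fin.snoc y s) := by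
  rintro u v ⟨i, hi⟩
  obtain ⟨s, hs⟩ := hatt u
  obtain ⟨t, ht⟩ := hatt v
  have hgap : ∃ j, 2 ≤ |(Fin.snoc u s : Fin (m + 1) → ℤ) j - (Fin.snoc v t : Fin (m + 1) → ℤ) j| :=
    ⟨i.castSucc, by simpa using hi⟩
  dsimp only
  rw [hs, ht]
  calc localConvexExt _ (fun j => ((u j + v j : ℤ) : ℝ) / 2)
      = localConvexExt _ (Fin.init fun j => (((Fin.snoc u s : Fin (m + 1) → ℤ) j +
          (Fin.snoc v t : Fin (m + 1) → ℤ) j : ℤ) : ℝ) / 2) := by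
        congr 1
        ext j
        simp [Fin.init]
    _ ≤ localConvexExt H _ :=
        localConvexExt_init_le (g := fun y => ⨅ s, H (Fin.snoc y s))
          (fun z => iInf_le_of_le (z (Fin.last m)) (by rw [Fin.snoc_init_self])) _
    _ ≤ _ := hH _ _ hgap

theorem IsSubgradient.le_snoc_init {H : (Fin (m + 1) → ℤ) → EReal} {x : Fin (m + 1) → ℤ}
    {q : Fin m → ℝ} (h : IsSubgradient H x (Fin.snoc q 0)) (s : ℤ) :
    H x ≤ H (Fin.snoc (Fin.init x) s) := by
  simpa [snoc_dotProduct, init_intCast_comp_sub] using h (Fin.snoc (Fin.init x) s)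

lemma iInf_snoc_init_eq {H : (Fin (m + 1) → ℤ) → EReal} {x : Fin (m + 1) → ℤ}
    (hx : ∀ s, H x ≤ H (Fin.snoc (Fin.init x) s)) : ⨅ s, H (Fin.snoc (Fin.init x) s) = H x :=
  le_antisymm (iInf_le_of_le (x (Fin.last m)) (by rw [Fin.snoc_init_self])) (le_iInf hx)

theorem isSubgradient_iInf_snoc_iff {H : (Fin (m + 1) → ℤ) → EReal} {x : Fin (m + 1) → ℤ}
    {q : Fin m → ℝ} (hx : ∀ s, H x ≤ H (Fin.snoc (Fin.init x) s)) :
    IsSubgradient (fun y => ⨅ s, H (Fin.snoc y s)) (Fin.init x) q ↔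
      IsSubgradient H x (Fin.snoc q 0) := by
  simp only [IsSubgradient, iInf_snoc_init_eq hx, snoc_dotProduct, zero_mul, add_zero,
    init_intCast_comp_sub]
  constructor
  · intro hg y
    exact (hg (Fin.init y)).trans (iInf_le_of_le (y (Fin.last m)) (by rw [Fin.snoc_init_self]))
  · intro hH y
    refine le_iInf fun s => ?_
    simpa using hH (Fin.snoc y s)

variable {a b : EReal} {x₀ : ℤ}

/-- `s ↦ max (-a (s - x₀)) (-b (s - x₀))`, the support function of `[a, b]` at `x₀ - s`
(with `⊥ * 0 = ⊤ * 0 = 0`). -/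
noncomputable def boxPenalty (a b : EReal) (x₀ s : ℤ) : EReal :=
  if x₀ ≤ s then -a * ((s - x₀ : ℤ) : ℝ) else -b * ((s - x₀ : ℤ) : ℝ)

lemma boxPenalty_of_le {s : ℤ} (h : x₀ ≤ s) : boxPenalty a b x₀ s = -a * ((s - x₀ : ℤ) : ℝ) :=
  if_pos h

lemma boxPenalty_of_ge {s : ℤ} (h : s ≤ x₀) : boxPenalty a b x₀ s = -b * ((s - x₀ : ℤ) : ℝ) := by
  rcases h.eq_or_lt with rfl | h
  · simp [boxPenalty]
  · exact if_neg (not_le.2 h)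

@[simp] lemma boxPenalty_self : boxPenalty a b x₀ x₀ = 0 := by simp [boxPenalty]

lemma boxPenalty_add_one : boxPenalty a b x₀ (x₀ + 1) = -a := by
  simp [boxPenalty_of_le (le_add_of_nonneg_right zero_le_one)]

lemma boxPenalty_sub_one : boxPenalty a b x₀ (x₀ - 1) = b := by
  simp [boxPenalty_of_ge (sub_le_self x₀ zero_le_one)]

lemma coe_le_boxPenalty {π : ℝ} (ha : a ≤ π) (hb : π ≤ b) (s : ℤ) :
    ((-π * ((s - x₀ : ℤ) : ℝ) : ℝ) : EReal) ≤ boxPenalty a b x₀ s := by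
  rcases le_total x₀ s with h | h
  · rw [boxPenalty_of_le h, EReal.coe_mul, EReal.coe_neg]
    exact mul_le_mul_of_nonneg_right (EReal.neg_le_neg_iff.2 ha)
      (EReal.coe_nonneg.2 (by exact_mod_cast sub_nonneg.2 h))
  · rw [boxPenalty_of_ge h,
      show -π * ((s - x₀ : ℤ) : ℝ) = π * ((x₀ - s : ℤ) : ℝ) by push_cast; ring,
      show ((s - x₀ : ℤ) : ℝ) = -((x₀ - s : ℤ) : ℝ) by push_cast; ring, EReal.coe_neg,
      EReal.neg_mul, mul_neg, neg_neg, EReal.coe_mul]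
    exact mul_le_mul_of_nonneg_right hb (EReal.coe_nonneg.2 (by exact_mod_cast sub_nonneg.2 h))

lemma boxPenalty_ne_bot {π : ℝ} (ha : a ≤ π) (hb : π ≤ b) (s : ℤ) : boxPenalty a b x₀ s ≠ ⊥ :=
  ne_bot_of_le_ne_bot (EReal.coe_ne_bot _) (coe_le_boxPenalty ha hb s)

lemma isIntOrTop_boxPenalty (ha : IsIntOrBot a) (hb : IsIntOrTop b) (s : ℤ) :
    IsIntOrTop (boxPenalty a b x₀ s) := by
  rcases le_total x₀ s with h | h
  · rw [boxPenalty_of_le h]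
    exact ha.neg.mul_intCast (sub_nonneg.2 h)
  · rw [boxPenalty_of_ge h, show ((s - x₀ : ℤ) : ℝ) = -((x₀ - s : ℤ) : ℝ) by push_cast; ring,
      EReal.coe_neg, EReal.neg_mul, mul_neg, neg_neg]
    exact hb.mul_intCast (sub_nonneg.2 h)

def IsAffineNearMidpoint (φ : ℤ → EReal) (s t : ℤ) : Prop :=
  ∃ A B : ℝ, (∀ r : ℤ, |((s + t : ℤ) : ℝ) / 2 - r| < 1 → φ r = ((A * r + B : ℝ) : EReal)) ∧
    ((A * (((s + t : ℤ) : ℝ) / 2) + B : ℝ) : EReal) ≤ (φ s + φ t) / 2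

theorem IntegrallyMidpointConvex.add_comp_apply {f : (Fin n → ℤ) → EReal}
    (hf : IntegrallyMidpointConvex f) (hfbot : ∀ z, f z ≠ ⊥) (k : Fin n) {φ : ℤ → EReal}
    (hφbot : ∀ s, φ s ≠ ⊥) (hφ : ∀ s t, φ s = ⊤ ∨ φ t = ⊤ ∨ IsAffineNearMidpoint φ s t) :
    IntegrallyMidpointConvex fun z => f z + φ (z k) := by
  intro u v huv
  dsimp only
  have htop : (⊤ : EReal) / 2 = ⊤ := EReal.top_div_of_pos_ne_top (by norm_num) (EReal.coe_ne_top 2)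
  rcases hφ (u k) (v k) with h | h | ⟨A, B, hnear, hle⟩
  · rw [h, EReal.add_top_of_ne_bot (hfbot u),
      EReal.top_add_of_ne_bot (EReal.add_ne_bot_iff.2 ⟨hfbot v, hφbot _⟩), htop]
    exact le_top
  · rw [h, EReal.add_top_of_ne_bot (hfbot v),
      EReal.add_top_of_ne_bot (EReal.add_ne_bot_iff.2 ⟨hfbot u, hφbot _⟩), htop]
    exact le_top
  calc localConvexExt (fun z => f z + φ (z k)) (fun i => ((u i + v i : ℤ) : ℝ) / 2)
      ≤ localConvexExt f (fun i => ((u i + v i : ℤ) : ℝ) / 2) +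
          ((Pi.single k A ⬝ᵥ (fun i => ((u i + v i : ℤ) : ℝ) / 2) + B : ℝ) : EReal) :=
        localConvexExt_add_le _ _ fun z hz => by
          rw [single_dotProduct]
          exact hnear (z k) (hz k)
    _ ≤ (f u + f v) / 2 + (φ (u k) + φ (v k)) / 2 :=
        add_le_add (hf u v huv) (by rwa [single_dotProduct])
    _ = ((f u + φ (u k)) + (f v + φ (v k))) / 2 := by
        rw [← EReal.add_div_of_nonneg_right (by norm_num), add_add_add_comm]

lemma isAffineNearMidpoint_boxPenalty_of_eq {c : ℝ} (hca : a ≤ c) (hcb : c ≤ b) {s t : ℤ}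
    (heq : ∀ r : ℤ, |((s + t : ℤ) : ℝ) / 2 - r| < 1 →
      boxPenalty a b x₀ r = ((-c * ((r - x₀ : ℤ) : ℝ) : ℝ) : EReal)) :
    IsAffineNearMidpoint (boxPenalty a b x₀) s t := by
  refine ⟨-c, c * x₀, fun r hr => by rw [heq r hr]; congr 1; push_cast; ring, ?_⟩
  convert EReal.coe_half_add_le (coe_le_boxPenalty hca hcb s) (coe_le_boxPenalty hca hcb t)
    using 2
  push_cast
  ring

theorem boxPenalty_eq_top_or_isAffineNearMidpoint {π : ℝ} (ha : a ≤ π) (hb : π ≤ b) (s t : ℤ) :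
    boxPenalty a b x₀ s = ⊤ ∨ boxPenalty a b x₀ t = ⊤ ∨
      IsAffineNearMidpoint (boxPenalty a b x₀) s t := by
  have hnear : ∀ r : ℤ, |((s + t : ℤ) : ℝ) / 2 - r| < 1 → s + t - 1 ≤ 2 * r ∧ 2 * r ≤ s + t + 1 :=
    fun r hr => by have := abs_le.1 (abs_sub_two_mul_le_one hr); omega
  rcases lt_trichotomy (s + t) (2 * x₀) with hlt | heq | hgt
  · induction b with
    | bot => exact absurd hb (not_le.2 (EReal.bot_lt_coe π))
    | top =>
      have htop : ∀ r < x₀, boxPenalty a ⊤ x₀ r = ⊤ := fun r hr => by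
        rw [boxPenalty_of_ge hr.le, EReal.neg_top,
          EReal.bot_mul_coe_of_neg (by exact_mod_cast sub_neg.2 hr)]
      rcases lt_or_ge s x₀ with hs | hs
      · exact .inl (htop s hs)
      · exact .inr (.inl (htop t (by omega)))
    | coe β =>
      refine .inr (.inr (isAffineNearMidpoint_boxPenalty_of_eq (ha.trans hb) le_rfl fun r hr => ?_))
      rw [boxPenalty_of_ge (by have := hnear r hr; omega), EReal.coe_mul, EReal.coe_neg]
  · refine .inr (.inr (isAffineNearMidpoint_boxPenalty_of_eq ha hb fun r hr => ?_))
    rw [show r = x₀ by have := hnear r hr; omega]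
    simp
  · induction a with
    | top => exact absurd ha (not_le.2 (EReal.coe_lt_top π))
    | bot =>
      have htop : ∀ r, x₀ < r → boxPenalty ⊥ b x₀ r = ⊤ := fun r hr => by
        rw [boxPenalty_of_le hr.le, EReal.neg_bot,
          EReal.top_mul_coe_of_pos (by exact_mod_cast sub_pos.2 hr)]
      rcases lt_or_ge x₀ s with hs | hs
      · exact .inl (htop s hs)
      · exact .inr (.inl (htop t (by omega)))
    | coe α =>
      refine .inr (.inr (isAffineNearMidpoint_boxPenalty_of_eq le_rfl (ha.trans hb) fun r hr => ?_))
      rw [boxPenalty_of_le (by have := hnear r hr; omega), EReal.coe_mul, EReal.coe_neg]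

theorem IntegrallyMidpointConvex.add_boxPenalty {f : (Fin n → ℤ) → EReal}
    (hf : IntegrallyMidpointConvex f) (hfbot : ∀ z, f z ≠ ⊥) {π : ℝ} (ha : a ≤ π) (hb : π ≤ b)
    (k : Fin n) (x₀ : ℤ) : IntegrallyMidpointConvex fun z => f z + boxPenalty a b x₀ (z k) :=
  hf.add_comp_apply hfbot k (boxPenalty_ne_bot ha hb)
    (boxPenalty_eq_top_or_isAffineNearMidpoint ha hb)

theorem IsSubgradient.add_boxPenalty_last {f : (Fin (m + 1) → ℤ) → EReal} {x : Fin (m + 1) → ℤ}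
    {p : Fin (m + 1) → ℝ} (hp : IsSubgradient f x p) (ha : a ≤ p (Fin.last m))
    (hb : p (Fin.last m) ≤ b) :
    IsSubgradient (fun z => f z + boxPenalty a b (x (Fin.last m)) (z (Fin.last m))) x
      (Fin.snoc (Fin.init p) 0) := by
  intro y
  have h := add_le_add (hp y) (coe_le_boxPenalty (x₀ := x (Fin.last m)) ha hb (y (Fin.last m)))
  rw [dotProduct_eq_init_add_last] at h
  simp only [snoc_dotProduct, zero_mul, add_zero, boxPenalty_self]
  convert h using 1
  rw [add_right_comm, ← EReal.coe_add]
  congr 2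
  simp only [Function.comp_apply, Pi.sub_apply]
  ring

theorem IntegrallyMidpointConvex.affine_add_affine_le {f : (Fin n → ℤ) → EReal}
    (hf : IntegrallyMidpointConvex f) {k : Fin n} {x : Fin n → ℤ} (Q : Fin n → ℝ) (c : ℝ)
    (hslice : ∀ z, z k = x k → ((Q ⬝ᵥ (Int.cast ∘ (z - x)) + c : ℝ) : EReal) ≤ f z)
    {u v : Fin n → ℤ} (hu : u k = x k + 1) (hv : v k = x k - 1) :
    ((Q ⬝ᵥ (Int.cast ∘ (u - x)) + c + (Q ⬝ᵥ (Int.cast ∘ (v - x)) + c) : ℝ) : EReal) ≤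
      f u + f v := by
  have hnear : ∀ z ∈ intNbhd fun i => ((u i + v i : ℤ) : ℝ) / 2, z k = x k := by
    intro z hz
    have := abs_le.1 (abs_sub_two_mul_le_one (hz k))
    omega
  have hgap : ∃ i, 2 ≤ |u i - v i| :=
    ⟨k, by rw [hu, hv, show x k + 1 - (x k - 1) = 2 by ring]; norm_num⟩
  have h := (affine_le_localConvexExt Q (c - Q ⬝ᵥ (Int.cast ∘ x)) fun z hz => by
    have := hslice z (hnear z hz)
    rw [dotProduct_intCast_sub] at this
    convert this using 2
    ring).trans (hf u v hgap)
  rw [dotProduct_midpoint] at h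
  refine EReal.coe_le_of_coe_half_le_half (le_of_eq_of_le ?_ h)
  rw [dotProduct_intCast_sub, dotProduct_intCast_sub]
  congr 1
  ring

theorem isLocalSubgradient_snoc {f : (Fin (m + 1) → ℤ) → EReal} (hfbot : ∀ z, f z ≠ ⊥)
    {x : Fin (m + 1) → ℤ} {c : ℤ} (hx : f x = ((c : ℝ) : EReal)) {q : Fin m → ℤ} {r : ℤ}
    {ℓ : (Fin (m + 1) → ℤ) → ℤ} (hℓ : ∀ y, ℓ y = q ⬝ᵥ (Fin.init y - Fin.init x) + c)
    (hslice : ∀ y, y (Fin.last m) = x (Fin.last m) → ((ℓ y : ℝ) : EReal) ≤ f y)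
    (hup : ∀ y ∈ unitCube x, y (Fin.last m) = x (Fin.last m) + 1 →
      ((r : ℝ) : EReal) ≤ f y - (ℓ y : ℝ))
    (hdown : ∀ y ∈ unitCube x, y (Fin.last m) = x (Fin.last m) - 1 →
      ((ℓ y : ℝ) : EReal) - f y ≤ (r : ℝ)) :
    IsLocalSubgradient f x (Int.cast ∘ (Fin.snoc q r : Fin (m + 1) → ℤ)) := by
  intro y hy
  have hℓy : ((Int.cast ∘ (Fin.snoc q r : Fin (m + 1) → ℤ)) ⬝ᵥ (Int.cast ∘ (y - x)) + c : ℝ) =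
      ℓ y + r * ((y (Fin.last m) - x (Fin.last m) : ℤ) : ℝ) := by
    rw [hℓ, Fin.comp_snoc, snoc_dotProduct, init_intCast_comp_sub, ← intCast_dotProduct]
    simp only [Function.comp_apply, Pi.sub_apply, Int.cast_add, Int.cast_sub]
    ring
  rw [hx, ← EReal.coe_add, hℓy]
  have hlast := abs_le.1 (hy (Fin.last m))
  rcases (by omega : y (Fin.last m) = x (Fin.last m) ∨ y (Fin.last m) = x (Fin.last m) + 1 ∨
      y (Fin.last m) = x (Fin.last m) - 1) with h | h | h
  · simpa [h] using hslice y h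
  · have := hup y (mem_unitCube.2 hy) h
    rw [EReal.le_sub_iff_add_le (.inl (EReal.coe_ne_bot _)) (.inl (EReal.coe_ne_top _)),
      ← EReal.coe_add] at this
    simpa [h, add_comm] using this
  · have := hdown y (mem_unitCube.2 hy) h
    rw [EReal.sub_le_iff_le_add (.inl (hfbot y)) (.inr (EReal.coe_ne_bot _)), add_comm,
      ← EReal.sub_le_iff_le_add (.inl (EReal.coe_ne_bot _)) (.inl (EReal.coe_ne_top _)),
      ← EReal.coe_sub] at this
    simpa [h, sub_eq_add_neg] using this

theorem exists_int_snoc_isSubgradient {f : (Fin (m + 1) → ℤ) → EReal}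
    (hf : IntegrallyMidpointConvex f) (hZ : ∀ z, IsIntOrTop (f z)) {x : Fin (m + 1) → ℤ} {c : ℤ}
    (hx : f x = ((c : ℝ) : EReal)) {a b : EReal} (ha : IsIntOrBot a) (hb : IsIntOrTop b)
    (hab : a ≤ b) {q : Fin m → ℤ}
    (hq : IsSubgradient (fun z => f z + boxPenalty a b (x (Fin.last m)) (z (Fin.last m))) x
      (Fin.snoc (Int.cast ∘ q) 0)) :
    ∃ r : ℤ, a ≤ (r : ℝ) ∧ ((r : ℝ) : EReal) ≤ b ∧
      IsSubgradient f x (Int.cast ∘ (Fin.snoc q r : Fin (m + 1) → ℤ)) := by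
  classical
  set ℓ : (Fin (m + 1) → ℤ) → ℤ := fun y => q ⬝ᵥ (Fin.init y - Fin.init x) + c with hℓ
  have hℓQ : ∀ y, ((ℓ y : ℤ) : ℝ) = Fin.snoc (Int.cast ∘ q) 0 ⬝ᵥ (Int.cast ∘ (y - x)) + c := by
    simp only [hℓ, snoc_dotProduct, zero_mul, add_zero, init_intCast_comp_sub, Int.cast_add,
      intCast_dotProduct, implies_true]
  have hℓle : ∀ y,
      ((ℓ y : ℝ) : EReal) ≤ f y + boxPenalty a b (x (Fin.last m)) (y (Fin.last m)) :=
    fun y => by simpa [hℓQ, hx] using hq y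
  have hslice : ∀ z, z (Fin.last m) = x (Fin.last m) → ((ℓ z : ℝ) : EReal) ≤ f z :=
    fun z hz => by simpa [hz] using hℓle z
  obtain ⟨r, har, hrb, hrup, hrdown⟩ := exists_int_between_of_finset ha hb hab
    (P := (unitCube x).filter fun y => y (Fin.last m) = x (Fin.last m) + 1)
    (M := (unitCube x).filter fun y => y (Fin.last m) = x (Fin.last m) - 1)
    (fun y _ => (hZ y).sub_intCast (ℓ y)) (fun y _ => (hZ y).intCast_sub (ℓ y))
    (fun y hy => EReal.le_sub_of_coe_le_add_neg (by
      simpa [(mem_filter.1 hy).2, boxPenalty_add_one] using hℓle y))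
    (fun y hy => (EReal.sub_le_iff_le_add (.inl (hZ y).ne_bot) (.inr hb.ne_bot)).2 (by
      simpa [(mem_filter.1 hy).2, boxPenalty_sub_one, add_comm] using hℓle y))
    (fun y hy y' hy' => EReal.coe_sub_le_sub_coe_of_coe_add_le (by
      simpa [hℓQ] using hf.affine_add_affine_le _ _ (fun z hz => by simpa [hℓQ] using hslice z hz)
        (mem_filter.1 hy).2 (mem_filter.1 hy').2))
  refine ⟨r, har, hrb, IsLocalSubgradient.isSubgradient hf hx <| isLocalSubgradient_snoc
    (fun z => (hZ z).ne_bot) hx (fun _ => rfl) hslice (fun y hy h => hrup y (mem_filter.2 ⟨hy, h⟩))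
    fun y hy h => hrdown y (mem_filter.2 ⟨hy, h⟩)⟩

theorem exists_int_subgradient_mem_box {f : (Fin n → ℤ) → EReal}
    (hf : IntegrallyMidpointConvex f) (hZ : ∀ z, IsIntOrTop (f z)) {x : Fin n → ℤ} {c : ℤ}
    (hx : f x = ((c : ℝ) : EReal)) {α β : Fin n → EReal} (hα : ∀ i, IsIntOrBot (α i))
    (hβ : ∀ i, IsIntOrTop (β i)) {p : Fin n → ℝ} (hp : IsSubgradient f x p)
    (hpbox : ∀ i, α i ≤ p i ∧ (p i : EReal) ≤ β i) :
    ∃ q : Fin n → ℤ, IsSubgradient f x (Int.cast ∘ q) ∧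
      ∀ i, α i ≤ (q i : ℝ) ∧ ((q i : ℝ) : EReal) ≤ β i := by
  induction n with
  | zero => exact ⟨0, fun y => by simp [Subsingleton.elim y x], fun i => i.elim0⟩
  | succ m ih =>
    obtain ⟨hpa, hpb⟩ := hpbox (Fin.last m)
    set H := fun z : Fin (m + 1) → ℤ =>
      f z + boxPenalty (α (Fin.last m)) (β (Fin.last m)) (x (Fin.last m)) (z (Fin.last m))
    have hHp : IsSubgradient H x (Fin.snoc (Fin.init p) 0) := hp.add_boxPenalty_last hpa hpb
    have hHx : H x = ((c : ℝ) : EReal) := by simp [H, hx]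
    have hHZ : ∀ z, IsIntOrTop (H z) := fun z =>
      (hZ z).add (isIntOrTop_boxPenalty (hα _) (hβ _) _)
    have hatt : ∀ y, ∃ s, ⨅ t, H (Fin.snoc y t) = H (Fin.snoc y s) := fun y =>
      exists_iInf_eq_of_isIntOrTop (r := Fin.init p ⬝ᵥ (Int.cast ∘ (y - Fin.init x)) + c)
        (fun s => hHZ _) fun s => by
        rw [EReal.coe_add]
        simpa [hHx, snoc_dotProduct, init_intCast_comp_sub] using hHp (Fin.snoc y s)
    obtain ⟨q, hq, hqbox⟩ := ih
      ((hf.add_boxPenalty (fun z => (hZ z).ne_bot) hpa hpb _ _).iInf_snoc hatt)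
      (fun y => (hatt y).elim fun s hs => hs ▸ hHZ _)
      ((iInf_snoc_init_eq hHp.le_snoc_init).trans hHx) (fun j => hα _) (fun j => hβ _)
      ((isSubgradient_iInf_snoc_iff hHp.le_snoc_init).2 hHp) (fun j => hpbox _)
    obtain ⟨r, har, hrb, hr⟩ := exists_int_snoc_isSubgradient hf hZ hx (hα _) (hβ _)
      (hpa.trans hpb) ((isSubgradient_iInf_snoc_iff hHp.le_snoc_init).1 hq)
    exact ⟨Fin.snoc q r, hr,
      Fin.lastCases (by simpa using ⟨har, hrb⟩) fun j => by simpa using hqbox j⟩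

end IntegrallyConvex

theorem integral_boxed_subdifferentiability_general (n : ℕ)
    (f : (Fin n → ℤ) → EReal)
    (hZ : ∀ z, f z = ⊤ ∨ ∃ m : ℤ, f z = ((m : ℝ) : EReal))
    (hf : IntegrallyConvexFn f) (x : Fin n → ℤ) (hx : f x ≠ ⊤)
    (α β : Fin n → EReal)
    (hα : ∀ i, α i = ⊥ ∨ ∃ m : ℤ, α i = ((m : ℝ) : EReal))
    (hβ : ∀ i, β i = ⊤ ∨ ∃ m : ℤ, β i = ((m : ℝ) : EReal))
    (hne : ∃ p : Fin n → ℝ,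
      (∀ y : Fin n → ℤ,
        (((∑ i, p i * ((y i - x i : ℤ) : ℝ)) : ℝ) : EReal) + f x ≤ f y) ∧
      (∀ i, α i ≤ ((p i : ℝ) : EReal) ∧ ((p i : ℝ) : EReal) ≤ β i)) :
    ∃ q : Fin n → ℤ,
      (∀ y : Fin n → ℤ,
        (((∑ i, (q i : ℝ) * ((y i - x i : ℤ) : ℝ)) : ℝ) : EReal) + f x ≤ f y) ∧
      (∀ i, α i ≤ (((q i : ℤ) : ℝ) : EReal) ∧ (((q i : ℤ) : ℝ) : EReal) ≤ β i) := by
  obtain ⟨p, hp, hpbox⟩ := hne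
  obtain ⟨c, hc⟩ := (hZ x).resolve_left hx
  exact exists_int_subgradient_mem_box hf.2 hZ hc hα hβ hp hpbox

/-- **Integral boxed subdifferentiability.**  For an integer-valued
integrally convex f : ℤⁿ → ℤ ∪ {+∞}, x ∈ dom f, and an integral box
B = [α, β] (entries of α in ℤ ∪ {−∞}, of β in ℤ ∪ {+∞}, α ≤ β):
if ∂f(x) ∩ B ≠ ∅ then ∂f(x) ∩ B contains an integer vector. -/
theorem integral_boxed_subdifferentiability (n : ℕ)
    (f : (Fin n → ℤ) → EReal)
    (hZ : ∀ z, f z = ⊤ ∨ ∃ m : ℤ, f z = ((m : ℝ) : EReal))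
    (hf : IntegrallyConvexFn f) (x : Fin n → ℤ) (hx : f x ≠ ⊤)
    (α β : Fin n → EReal)
    (hα : ∀ i, α i = ⊥ ∨ ∃ m : ℤ, α i = ((m : ℝ) : EReal))
    (hβ : ∀ i, β i = ⊤ ∨ ∃ m : ℤ, β i = ((m : ℝ) : EReal))
    (hαβ : ∀ i, α i ≤ β i)
    (hne : ∃ p : Fin n → ℝ,
      (∀ y : Fin n → ℤ,
        (((∑ i, p i * ((y i - x i : ℤ) : ℝ)) : ℝ) : EReal) + f x ≤ f y) ∧
      (∀ i, α i ≤ ((p i : ℝ) : EReal) ∧ ((p i : ℝ) : EReal) ≤ β i)) :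
    ∃ q : Fin n → ℤ,
      (∀ y : Fin n → ℤ,
        (((∑ i, (q i : ℝ) * ((y i - x i : ℤ) : ℝ)) : ℝ) : EReal) + f x ≤ f y) ∧
      (∀ i, α i ≤ (((q i : ℤ) : ℝ) : EReal) ∧ (((q i : ℤ) : ℝ) : EReal) ≤ β i) :=
  integral_boxed_subdifferentiability_general n f hZ hf x hx α β hα hβ hne
end
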